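/- arXiv:1207.5127 — 7 statements merged into one kernel-verified Lean document; each statement's English description precedes it below -/
import Mathlib

section
/- Let n, α, λ, β, c be real numbers with n ≠ 1, let I ⊆ ℝ be an open interval, and let V : ℝ → ℝ be twice differentiable on I with V(z) > 0 for all z ∈ I. Suppose V satisfies (α - c)·(n-1)²·V³ - λ·(n-1)²·V² - β·c·n·(n-1)·V·V'' + β·c·n·(2n-1)·(V')² = 0 on I. Then the function U := V^(-1/(n-1)) (real power) satisfies (α - c)·U - λ·V^(-n/(n-1)) + β·c·(V^(-n/(n-1)))'' = 0 on I, i.e. U satisfies the integrated travelling-wave RLW equation (α - c)·U - λ·Uⁿ + β·c·(Uⁿ)'' = 0 with Uⁿ interpreted as V^(-n/(n-1)). -/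
/-!
With `p = -n/(n-1)` we have `-1/(n-1) = p + 1`, and the chain rule gives
`(V^p)'' = p V'' V^(p-1) + p(p-1) (V')² V^(p-2)`. Hence the left-hand side of the RLW equation is
`V^(p-2) ((α-c)V³ - λV² + βc(p V V'' + p(p-1) (V')²))`, and since `p(n-1) = -n` and
`p(p-1)(n-1)² = n(2n-1)`, the bracket is the transformed equation divided by `(n-1)²`.
-/

open Filter Topology

theorem deriv_deriv_rpow_const {f : ℝ → ℝ} {x p : ℝ}
    (hf : ∀ᶠ y in 𝓝 x, DifferentiableAt ℝ f y ∧ f y ≠ 0)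
    (hf' : DifferentiableAt ℝ (deriv f) x) :
    deriv (deriv fun y => f y ^ p) x
      = p * deriv (deriv f) x * f x ^ (p - 1) + p * (p - 1) * deriv f x ^ 2 * f x ^ (p - 2) := by
  have hderiv : deriv (fun y => f y ^ p) =ᶠ[𝓝 x] fun y => p * deriv f y * f y ^ (p - 1) := by
    filter_upwards [hf] with y hy
    rw [deriv_rpow_const hy.1 (Or.inl hy.2)]
    ring
  obtain ⟨hfx, hfx0⟩ := hf.self_of_nhds
  have h : HasDerivAt (fun y => p * deriv f y * f y ^ (p - 1))
      (p * deriv (deriv f) x * f x ^ (p - 1) + p * (p - 1) * deriv f x ^ 2 * f x ^ (p - 2)) x :=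
    ((hf'.hasDerivAt.const_mul p).mul (hfx.hasDerivAt.rpow_const (Or.inl hfx0))).congr_deriv
      (by rw [sub_sub, one_add_one_eq_two]; ring)
  rw [hderiv.deriv_eq, h.deriv]

/-- If `V > 0` is twice differentiable on an open interval and satisfies the
transformed equation
`(α-c)(n-1)²V³ - λ(n-1)²V² - βcn(n-1)V·V'' + βcn(2n-1)(V')² = 0`,
then `U = V^(-1/(n-1))` satisfies the integrated travelling-wave RLW equation
`(α-c)·U - λ·Uⁿ + β·c·(Uⁿ)'' = 0`, with `Uⁿ` interpreted as `V^(-n/(n-1))`. -/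
theorem variant_RLW_power_transformation
    (n α lam β c a b : ℝ) (hn : n ≠ 1) (V : ℝ → ℝ)
    (hV₁ : ∀ z ∈ Set.Ioo a b, DifferentiableAt ℝ V z)
    (hV₂ : ∀ z ∈ Set.Ioo a b, DifferentiableAt ℝ (deriv V) z)
    (hVpos : ∀ z ∈ Set.Ioo a b, 0 < V z)
    (hODE : ∀ z ∈ Set.Ioo a b,
      (α - c) * (n - 1) ^ 2 * V z ^ 3 - lam * (n - 1) ^ 2 * V z ^ 2
        - β * c * n * (n - 1) * V z * deriv (deriv V) z
        + β * c * n * (2 * n - 1) * (deriv V z) ^ 2 = 0) :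
    ∀ z ∈ Set.Ioo a b,
      (α - c) * V z ^ (-1 / (n - 1)) - lam * V z ^ (-(n / (n - 1)))
        + β * c * deriv (deriv (fun y => V y ^ (-(n / (n - 1))))) z = 0 := by
  intro z hz
  have hn' : n - 1 ≠ 0 := sub_ne_zero.mpr hn
  have hV : V z ≠ 0 := (hVpos z hz).ne'
  have hnear : ∀ᶠ y in 𝓝 z, DifferentiableAt ℝ V y ∧ V y ≠ 0 := by
    filter_upwards [isOpen_Ioo.mem_nhds hz] with y hy
    exact ⟨hV₁ y hy, (hVpos y hy).ne'⟩
  rw [deriv_deriv_rpow_const hnear (hV₂ z hz)]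
  set p := -(n / (n - 1)) with hp
  have hpow (y : ℝ) (k : ℕ) (hy : y = p - 2 + k) : V z ^ y = V z ^ (p - 2) * V z ^ k := by
    rw [hy, Real.rpow_add_natCast hV]
  have hU : V z ^ (-1 / (n - 1)) = V z ^ (p - 2) * V z ^ 3 :=
    hpow _ 3 (by rw [hp]; field_simp; push_cast; ring)
  have hUn : V z ^ p = V z ^ (p - 2) * V z ^ 2 := hpow _ 2 (by push_cast; ring)
  have hUn' : V z ^ (p - 1) = V z ^ (p - 2) * V z ^ 1 := hpow _ 1 (by push_cast; ring)
  have hreduced : (α - c) * V z ^ 3 - lam * V z ^ 2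
      + β * c * (p * deriv (deriv V) z * V z + p * (p - 1) * deriv V z ^ 2) = 0 := by
    rw [hp]
    field_simp
    linear_combination hODE z hz
  rw [hU, hUn, hUn']
  linear_combination V z ^ (p - 2) * hreduced
end

section
/- (PHI-four, Case I.) Let n, λ, β, α, c ∈ ℂ with β ≠ 0 and c² ≠ α. Set b = λ(n-1)²/(4(c²-α)), a₀ = λ(n+1)/(2β), and b₂ = (n+1)(n-1)²λ²/(8β(c²-α)). Let S ⊆ ℂ be open and let φ : ℂ → ℂ be differentiable on S with φ'(z) = b + φ(z)² and φ(z) ≠ 0 for all z ∈ S. Then V := a₀ + b₂·φ⁻² satisfies -λ·(n-1)²·V² + β·(n-1)²·V³ + (α - c²)·(n-1)·V·V'' + (α - c²)·(2-n)·(V')² = 0 on S. -/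
/-!
The substitution `ψ = φ⁻¹` turns the Riccati equation `φ' = b + φ²` into `ψ' = -(1 + b ψ²)`,
so `V = a₀ + a₀ b ψ²` (note `b₂ = a₀ b`) has `V' = -2 a₀ b ψ (1 + b ψ²)` and
`V'' = 2 a₀ b (1 + b ψ²)(1 + 3 b ψ²)`. Substituting, the left-hand side of (m3nd4) collapses to
`(n-1)² a₀² (1 + b ψ²)³ (β a₀ - λ(n+1)/2)`, which vanishes by the choice of `a₀`.
-/

open Filter Topology

section Riccati

variable {𝕜 : Type*} [NontriviallyNormedField 𝕜] {φ ψ : 𝕜 → 𝕜} {b z : 𝕜}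

theorem HasDerivAt.inv_of_riccati (hφ : HasDerivAt φ (b + φ z ^ 2) z) (hz : φ z ≠ 0) :
    HasDerivAt (fun w => (φ w)⁻¹) (-(1 + b * (φ z)⁻¹ ^ 2)) z := by
  refine (hφ.fun_inv hz).congr_deriv ?_
  field_simp
  ring

theorem HasDerivAt.const_add_const_mul_sq_of_riccati (hψ : HasDerivAt ψ (-(1 + b * ψ z ^ 2)) z)
    (a k : 𝕜) :
    HasDerivAt (fun w => a + k * ψ w ^ 2) (-2 * k * ψ z * (1 + b * ψ z ^ 2)) z := by
  refine (((hψ.fun_pow 2).const_mul k).const_add a).congr_deriv ?_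
  push_cast
  ring

theorem deriv_deriv_const_add_const_mul_sq_of_riccati {S : Set 𝕜} (hS : IsOpen S)
    (hψ : ∀ w ∈ S, HasDerivAt ψ (-(1 + b * ψ w ^ 2)) w) (a k : 𝕜) (hz : z ∈ S) :
    deriv (deriv fun w => a + k * ψ w ^ 2) z
      = 2 * k * (1 + b * ψ z ^ 2) * (1 + 3 * b * ψ z ^ 2) := by
  have hderiv : deriv (fun w => a + k * ψ w ^ 2)
      =ᶠ[𝓝 z] fun w => -2 * k * (ψ w + b * ψ w ^ 3) := by
    filter_upwards [hS.mem_nhds hz] with w hw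
    rw [((hψ w hw).const_add_const_mul_sq_of_riccati a k).deriv]
    ring
  have hsecond : HasDerivAt (fun w => -2 * k * (ψ w + b * ψ w ^ 3))
      (-2 * k * (-(1 + b * ψ z ^ 2) + b * (3 * ψ z ^ 2 * -(1 + b * ψ z ^ 2)))) z := by
    simpa using ((hψ z hz).add (((hψ z hz).fun_pow 3).const_mul b)).const_mul (-2 * k)
  rw [hderiv.deriv_eq, hsecond.deriv]
  ring

end Riccati

section Algebra

variable {K : Type*} [Field K]

theorem mul_sq_div_two_mul_eq [NeZero (2 : K)] (x β : K) : β * (x / (2 * β)) ^ 2 = x / 2 * (x / (2 * β)) := by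
  rcases eq_or_ne β 0 with rfl | hβ
  · simp
  · field_simp

theorem phi_four_residual_eq_zero [CharZero K] {n lam β α c a₀ b ψ : K}
    (hb : (α - c ^ 2) * b = -(lam * (n - 1) ^ 2 / 4)) (ha₀ : β * a₀ ^ 2 = lam * (n + 1) / 2 * a₀) :
    let V := a₀ + a₀ * b * ψ ^ 2;
    -lam * (n - 1) ^ 2 * V ^ 2 + β * (n - 1) ^ 2 * V ^ 3
      + (α - c ^ 2) * (n - 1) * V * (2 * (a₀ * b) * (1 + b * ψ ^ 2) * (1 + 3 * b * ψ ^ 2))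
      + (α - c ^ 2) * (2 - n) * (-2 * (a₀ * b) * ψ * (1 + b * ψ ^ 2)) ^ 2 = 0 := by
  linear_combination a₀ * (1 + b * ψ ^ 2) ^ 2
      * (a₀ * (2 * (n - 1) * (1 + 3 * b * ψ ^ 2) + 4 * (2 - n) * b * ψ ^ 2) * hb
        + (n - 1) ^ 2 * (1 + b * ψ ^ 2) * ha₀)

end Algebra

theorem PHI_four_case_I_general
    (n lam β α c : ℂ) (hc : c ^ 2 ≠ α)
    (S : Set ℂ) (hS : IsOpen S) (φ : ℂ → ℂ)
    (hφdiff : ∀ z ∈ S, DifferentiableAt ℂ φ z)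
    (hφ : ∀ z ∈ S, deriv φ z = lam * (n - 1) ^ 2 / (4 * (c ^ 2 - α)) + φ z ^ 2)
    (hφne : ∀ z ∈ S, φ z ≠ 0)
    (V : ℂ → ℂ)
    (hV : ∀ z, V z = lam * (n + 1) / (2 * β)
        + (n + 1) * (n - 1) ^ 2 * lam ^ 2 / (8 * β * (c ^ 2 - α)) * (φ z ^ 2)⁻¹) :
    ∀ z ∈ S,
      -lam * (n - 1) ^ 2 * V z ^ 2 + β * (n - 1) ^ 2 * V z ^ 3
        + (α - c ^ 2) * (n - 1) * V z * deriv (deriv V) z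
        + (α - c ^ 2) * (2 - n) * (deriv V z) ^ 2 = 0 := by
  set b := lam * (n - 1) ^ 2 / (4 * (c ^ 2 - α))
  set a₀ := lam * (n + 1) / (2 * β)
  have hVψ : V = fun w => a₀ + a₀ * b * (φ w)⁻¹ ^ 2 := by
    funext w
    rw [hV, inv_pow, div_mul_div_comm]
    ring_nf
  have hψ : ∀ z ∈ S, HasDerivAt (fun w => (φ w)⁻¹) (-(1 + b * (φ z)⁻¹ ^ 2)) z := fun z hz =>
    (hφ z hz ▸ (hφdiff z hz).hasDerivAt).inv_of_riccati (hφne z hz)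
  have hb : (α - c ^ 2) * b = -(lam * (n - 1) ^ 2 / 4) := by
    have : c ^ 2 - α ≠ 0 := sub_ne_zero.mpr hc
    simp only [b]
    field_simp
    ring
  intro z hz
  rw [hVψ, deriv_deriv_const_add_const_mul_sq_of_riccati hS hψ _ _ hz,
    ((hψ z hz).const_add_const_mul_sq_of_riccati _ _).deriv]
  exact phi_four_residual_eq_zero hb (mul_sq_div_two_mul_eq _ _)

/-- PHI-four, Case I: with `b = λ(n-1)²/(4(c²-α))`, `a₀ = λ(n+1)/(2β)`,
`b₂ = (n+1)(n-1)²λ²/(8β(c²-α))`, and `φ` a solution of the Riccati equation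
`φ' = b + φ²` which is nonvanishing on an open set `S`, the function
`V = a₀ + b₂·φ⁻²` satisfies equation (m3nd4) on `S`. -/
theorem PHI_four_case_I
    (n lam β α c : ℂ) (hβ : β ≠ 0) (hc : c ^ 2 ≠ α)
    (S : Set ℂ) (hS : IsOpen S) (φ : ℂ → ℂ)
    (hφdiff : ∀ z ∈ S, DifferentiableAt ℂ φ z)
    (hφ : ∀ z ∈ S, deriv φ z = lam * (n - 1) ^ 2 / (4 * (c ^ 2 - α)) + φ z ^ 2)
    (hφne : ∀ z ∈ S, φ z ≠ 0)
    (V : ℂ → ℂ)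
    (hV : ∀ z, V z = lam * (n + 1) / (2 * β)
        + (n + 1) * (n - 1) ^ 2 * lam ^ 2 / (8 * β * (c ^ 2 - α)) * (φ z ^ 2)⁻¹) :
    ∀ z ∈ S,
      -lam * (n - 1) ^ 2 * V z ^ 2 + β * (n - 1) ^ 2 * V z ^ 3
        + (α - c ^ 2) * (n - 1) * V z * deriv (deriv V) z
        + (α - c ^ 2) * (2 - n) * (deriv V z) ^ 2 = 0 :=
  PHI_four_case_I_general n lam β α c hc S hS φ hφdiff hφ hφne V hV
end

section
/- (PHI-four, Case II.) Let n, λ, β, α, c ∈ ℂ with β ≠ 0, n ≠ 1 and c² ≠ α. Set b = λ(n-1)²/(4(c²-α)), a₀ = λ(n+1)/(2β), and a₂ = 2(c²-α)(n+1)/(β(n-1)²). Let S ⊆ ℂ be open and let φ : ℂ → ℂ be differentiable on S with φ'(z) = b + φ(z)² for all z ∈ S. Then V := a₀ + a₂·φ² satisfies -λ·(n-1)²·V² + β·(n-1)²·V³ + (α - c²)·(n-1)·V·V'' + (α - c²)·(2-n)·(V')² = 0 on S. -/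
/-!
If `φ' = b + φ²`, then `V = a₀ + a₂ φ²` has `V' = 2 a₂ φ (b + φ²)` and
`V'' = 2 a₂ (b + φ²)(b + 3φ²)`, so the left side of (m3nd4) becomes a polynomial in `φ`.
The choice of `b`, `a₀`, `a₂` makes `V = a₂ (b + φ²)`, and after dividing by `a₂² (b + φ²)²`
what remains is linear in `φ²` with both coefficients vanishing.
-/

open Filter Topology

section Riccati

variable {𝕜 : Type*} [NontriviallyNormedField 𝕜] {φ : 𝕜 → 𝕜} {b : 𝕜}

theorem HasDerivAt.sq_of_riccati {z : 𝕜} (h : HasDerivAt φ (b + φ z ^ 2) z) :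
    HasDerivAt (fun w => φ w ^ 2) (2 * φ z * (b + φ z ^ 2)) z := by
  simpa using h.fun_pow 2

variable {S : Set 𝕜} (a₀ a₂ : 𝕜)

theorem deriv_quadratic_of_riccati (hφ : ∀ z ∈ S, HasDerivAt φ (b + φ z ^ 2) z)
    {z : 𝕜} (hz : z ∈ S) :
    deriv (fun w => a₀ + a₂ * φ w ^ 2) z = 2 * a₂ * φ z * (b + φ z ^ 2) := by
  rw [(((hφ z hz).sq_of_riccati.const_mul a₂).const_add a₀).deriv]
  ring

theorem deriv_deriv_quadratic_of_riccati (hS : IsOpen S)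
    (hφ : ∀ z ∈ S, HasDerivAt φ (b + φ z ^ 2) z) {z : 𝕜} (hz : z ∈ S) :
    deriv (deriv fun w => a₀ + a₂ * φ w ^ 2) z
      = 2 * a₂ * (b + φ z ^ 2) * (b + 3 * φ z ^ 2) := by
  have hderiv : deriv (fun w => a₀ + a₂ * φ w ^ 2)
      =ᶠ[𝓝 z] fun w => 2 * a₂ * φ w * (b + φ w ^ 2) := by
    filter_upwards [hS.mem_nhds hz] with w hw
    exact deriv_quadratic_of_riccati a₀ a₂ hφ hw
  have hprod : HasDerivAt (fun w => 2 * a₂ * φ w * (b + φ w ^ 2))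
      (2 * a₂ * (b + φ z ^ 2) * (b + φ z ^ 2) + 2 * a₂ * φ z * (2 * φ z * (b + φ z ^ 2))) z :=
    ((hφ z hz).const_mul (2 * a₂)).mul ((hφ z hz).sq_of_riccati.const_add b)
  rw [hderiv.deriv_eq, hprod.deriv]
  ring

end Riccati

theorem phi_four_residual_eq_zero_s10 {R : Type*} [CommRing R] {n lam β α c b a₂ : R}
    (hb : lam * (n - 1) ^ 2 = 4 * (c ^ 2 - α) * b)
    (ha₂ : β * (n - 1) ^ 2 * a₂ = 2 * (c ^ 2 - α) * (n + 1)) (x : R) :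
    -lam * (n - 1) ^ 2 * (a₂ * (b + x ^ 2)) ^ 2 + β * (n - 1) ^ 2 * (a₂ * (b + x ^ 2)) ^ 3
      + (α - c ^ 2) * (n - 1) * (a₂ * (b + x ^ 2)) * (2 * a₂ * (b + x ^ 2) * (b + 3 * x ^ 2))
      + (α - c ^ 2) * (2 - n) * (2 * a₂ * x * (b + x ^ 2)) ^ 2 = 0 := by
  linear_combination (a₂ ^ 2 * (b + x ^ 2) ^ 3) * ha₂ - (a₂ ^ 2 * (b + x ^ 2) ^ 2) * hb

/-- PHI-four, Case II: with `b = λ(n-1)²/(4(c²-α))`, `a₀ = λ(n+1)/(2β)`,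
`a₂ = 2(c²-α)(n+1)/(β(n-1)²)`, and `φ` a solution of the Riccati equation
`φ' = b + φ²` on an open set `S`, the function `V = a₀ + a₂·φ²` satisfies
equation (m3nd4) on `S`. -/
theorem PHI_four_case_II
    (n lam β α c : ℂ) (hβ : β ≠ 0) (hn : n ≠ 1) (hc : c ^ 2 ≠ α)
    (S : Set ℂ) (hS : IsOpen S) (φ : ℂ → ℂ)
    (hφdiff : ∀ z ∈ S, DifferentiableAt ℂ φ z)
    (hφ : ∀ z ∈ S, deriv φ z = lam * (n - 1) ^ 2 / (4 * (c ^ 2 - α)) + φ z ^ 2)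
    (V : ℂ → ℂ)
    (hV : ∀ z, V z = lam * (n + 1) / (2 * β)
        + 2 * (c ^ 2 - α) * (n + 1) / (β * (n - 1) ^ 2) * φ z ^ 2) :
    ∀ z ∈ S,
      -lam * (n - 1) ^ 2 * V z ^ 2 + β * (n - 1) ^ 2 * V z ^ 3
        + (α - c ^ 2) * (n - 1) * V z * deriv (deriv V) z
        + (α - c ^ 2) * (2 - n) * (deriv V z) ^ 2 = 0 := by
  set b := lam * (n - 1) ^ 2 / (4 * (c ^ 2 - α))
  set a₂ := 2 * (c ^ 2 - α) * (n + 1) / (β * (n - 1) ^ 2)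
  have hn1 : n - 1 ≠ 0 := sub_ne_zero.mpr hn
  have hca : c ^ 2 - α ≠ 0 := sub_ne_zero.mpr hc
  have hb : lam * (n - 1) ^ 2 = 4 * (c ^ 2 - α) * b := by
    simp only [b]; field_simp
  have ha₂ : β * (n - 1) ^ 2 * a₂ = 2 * (c ^ 2 - α) * (n + 1) := by
    simp only [a₂]; field_simp
  have ha₀ : lam * (n + 1) / (2 * β) = a₂ * b := by
    simp only [a₂, b]; field_simp; ring
  intro z hz
  have hriccati : ∀ w ∈ S, HasDerivAt φ (b + φ w ^ 2) w :=
    fun w hw => hφ w hw ▸ (hφdiff w hw).hasDerivAt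
  obtain rfl : V = fun w => a₂ * b + a₂ * φ w ^ 2 := funext fun w => ha₀ ▸ hV w
  rw [deriv_quadratic_of_riccati _ _ hriccati hz,
    deriv_deriv_quadratic_of_riccati _ _ hS hriccati hz]
  beta_reduce
  rw [← mul_add]
  exact phi_four_residual_eq_zero_s10 hb ha₂ (φ z)
end

section
/- (PHI-four, Cases III/IV.) Let n, λ, β, α, c, b ∈ ℂ with β ≠ 0, b ≠ 0, and suppose c² - α = λ(n-1)²/(16b). Set a₀ = λ(n+1)/(4β), a₂ = (n+1)λ/(8βb), and b₂ = (n+1)λb/(8β). Let S ⊆ ℂ be open and let φ : ℂ → ℂ be differentiable on S with φ'(z) = b + φ(z)² and φ(z) ≠ 0 for all z ∈ S. Then V := a₀ + a₂·φ² + b₂·φ⁻² satisfies -λ·(n-1)²·V² + β·(n-1)²·V³ + (α - c²)·(n-1)·V·V'' + (α - c²)·(2-n)·(V')² = 0 on S. -/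
/-!
Writing `K = a₂`, one has `a₀ = 2bK` and `b₂ = b²K`, so `V = K ψ²` with `ψ = φ + b/φ`.
With `χ = φ - b/φ`, the Riccati equation gives `ψ' = ψχ` and `χ' = ψ²`, and `χ² = ψ² - 4b`.
Hence `V' = 2Kψ²χ` and `V'' = 2Kψ²(ψ² + 2χ²)`, and once `c² - α` and `K` are substituted
the left side of (m3nd4) becomes a multiple of `χ² - ψ² + 4b`.
-/

open Filter Set

section Riccati

variable {𝕜 : Type*} [NontriviallyNormedField 𝕜] {φ : 𝕜 → 𝕜} {b z : 𝕜}

theorem HasDerivAt.add_const_div_of_riccati (hφ : HasDerivAt φ (b + φ z ^ 2) z) (hz : φ z ≠ 0) :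
    HasDerivAt (fun w => φ w + b / φ w) ((φ z + b / φ z) * (φ z - b / φ z)) z := by
  refine (hφ.fun_add ((hasDerivAt_const z b).fun_div hφ hz)).congr_deriv ?_
  field_simp
  ring

theorem HasDerivAt.sub_const_div_of_riccati (hφ : HasDerivAt φ (b + φ z ^ 2) z) (hz : φ z ≠ 0) :
    HasDerivAt (fun w => φ w - b / φ w) ((φ z + b / φ z) ^ 2) z := by
  refine (hφ.fun_sub ((hasDerivAt_const z b).fun_div hφ hz)).congr_deriv ?_
  field_simp
  ring

end Riccati

section SquareAnsatz

variable {𝕜 : Type*} [NontriviallyNormedField 𝕜] {V ψ χ : 𝕜 → 𝕜} {S : Set 𝕜} {K : 𝕜}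

theorem hasDerivAt_of_eqOn_const_mul_sq (hS : IsOpen S) (hV : EqOn V (fun w => K * ψ w ^ 2) S)
    (hψ : ∀ w ∈ S, HasDerivAt ψ (ψ w * χ w) w) {z : 𝕜} (hz : z ∈ S) :
    HasDerivAt V (2 * K * ψ z ^ 2 * χ z) z := by
  have h := ((hψ z hz).fun_pow 2).const_mul K
  refine (h.congr_of_eventuallyEq (eventually_of_mem (hS.mem_nhds hz) hV)).congr_deriv ?_
  push_cast
  ring

theorem deriv_deriv_of_eqOn_const_mul_sq (hS : IsOpen S) (hV : EqOn V (fun w => K * ψ w ^ 2) S)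
    (hψ : ∀ w ∈ S, HasDerivAt ψ (ψ w * χ w) w) (hχ : ∀ w ∈ S, HasDerivAt χ (ψ w ^ 2) w)
    {z : 𝕜} (hz : z ∈ S) :
    deriv (deriv V) z = 2 * K * ψ z ^ 2 * (ψ z ^ 2 + 2 * χ z ^ 2) := by
  have hV' : deriv V =ᶠ[nhds z] fun w => 2 * K * ψ w ^ 2 * χ w :=
    eventually_of_mem (hS.mem_nhds hz) fun w hw =>
      (hasDerivAt_of_eqOn_const_mul_sq hS hV hψ hw).deriv
  have h := ((((hψ z hz).fun_pow 2).const_mul (2 * K)).mul (hχ z hz)).congr_of_eventuallyEq hV'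
  rw [h.deriv]
  push_cast
  ring

end SquareAnsatz

section Algebra

variable {F : Type*} [Field F] [CharZero F]

theorem phi_four_ansatz_eq_const_mul_sq {n lam β b x : F} (hb : b ≠ 0) (hx : x ≠ 0) :
    lam * (n + 1) / (4 * β) + (n + 1) * lam / (8 * β * b) * x ^ 2
        + (n + 1) * lam * b / (8 * β) * (x ^ 2)⁻¹
      = (n + 1) * lam / (8 * β * b) * (x + b / x) ^ 2 := by
  field_simp
  ring

theorem phi_four_residual_eq_zero_s11 {n lam β A b K ψ χ : F} (hβ : β ≠ 0) (hb : b ≠ 0)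
    (hA : A = -(lam * (n - 1) ^ 2 / (16 * b))) (hK : K = (n + 1) * lam / (8 * β * b))
    (hχ : χ ^ 2 = ψ ^ 2 - 4 * b) :
    -lam * (n - 1) ^ 2 * (K * ψ ^ 2) ^ 2 + β * (n - 1) ^ 2 * (K * ψ ^ 2) ^ 3
      + A * (n - 1) * (K * ψ ^ 2) * (2 * K * ψ ^ 2 * (ψ ^ 2 + 2 * χ ^ 2))
      + A * (2 - n) * (2 * K * ψ ^ 2 * χ) ^ 2 = 0 := by
  subst hA hK
  field_simp
  linear_combination (-32 * lam ^ 3 * ψ ^ 4 * (n ^ 2 - 1) ^ 2) * hχ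

end Algebra

/-- PHI-four, Cases III/IV: with `c² - α = λ(n-1)²/(16b)`, `a₀ = λ(n+1)/(4β)`,
`a₂ = (n+1)λ/(8βb)`, `b₂ = (n+1)λb/(8β)`, and `φ` a nonvanishing solution of the
Riccati equation `φ' = b + φ²` on an open set `S`, the function
`V = a₀ + a₂·φ² + b₂·φ⁻²` satisfies equation (m3nd4) on `S`. -/
theorem PHI_four_case_III_IV
    (n lam β α c b : ℂ) (hβ : β ≠ 0) (hb : b ≠ 0)
    (hc : c ^ 2 - α = lam * (n - 1) ^ 2 / (16 * b))
    (S : Set ℂ) (hS : IsOpen S) (φ : ℂ → ℂ)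
    (hφdiff : ∀ z ∈ S, DifferentiableAt ℂ φ z)
    (hφ : ∀ z ∈ S, deriv φ z = b + φ z ^ 2)
    (hφne : ∀ z ∈ S, φ z ≠ 0)
    (V : ℂ → ℂ)
    (hV : ∀ z, V z = lam * (n + 1) / (4 * β)
        + (n + 1) * lam / (8 * β * b) * φ z ^ 2
        + (n + 1) * lam * b / (8 * β) * (φ z ^ 2)⁻¹) :
    ∀ z ∈ S,
      -lam * (n - 1) ^ 2 * V z ^ 2 + β * (n - 1) ^ 2 * V z ^ 3
        + (α - c ^ 2) * (n - 1) * V z * deriv (deriv V) z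
        + (α - c ^ 2) * (2 - n) * (deriv V z) ^ 2 = 0 := by
  intro z hz
  set K := (n + 1) * lam / (8 * β * b)
  set ψ : ℂ → ℂ := fun w => φ w + b / φ w
  set χ : ℂ → ℂ := fun w => φ w - b / φ w
  have hRic : ∀ w ∈ S, HasDerivAt φ (b + φ w ^ 2) w := fun w hw =>
    hφ w hw ▸ (hφdiff w hw).hasDerivAt
  have hψ : ∀ w ∈ S, HasDerivAt ψ (ψ w * χ w) w := fun w hw =>
    (hRic w hw).add_const_div_of_riccati (hφne w hw)
  have hχ : ∀ w ∈ S, HasDerivAt χ (ψ w ^ 2) w := fun w hw =>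
    (hRic w hw).sub_const_div_of_riccati (hφne w hw)
  have hVeq : EqOn V (fun w => K * ψ w ^ 2) S := fun w hw =>
    (hV w).trans (phi_four_ansatz_eq_const_mul_sq hb (hφne w hw))
  rw [deriv_deriv_of_eqOn_const_mul_sq hS hVeq hψ hχ hz,
    (hasDerivAt_of_eqOn_const_mul_sq hS hVeq hψ hz).deriv, hVeq hz]
  refine phi_four_residual_eq_zero_s11 hβ hb (by linear_combination -hc) rfl ?_
  have hφz := hφne z hz
  simp only [ψ, χ]
  field_simp
  ring
end

section
/- Let a₀ ∈ ℂ and set λ = -a₀. Then the function U(z) = a₀·(1 + i·tan(a₀·z/2)) satisfies U''(z) + (1/2)·U(z)³ + (3/2)·λ·U(z)² + λ²·U(z) = 0 at every z ∈ ℂ with cos(a₀·z/2) ≠ 0, where primes denote complex derivatives and tan is the complex tangent. -/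
/-!
`U = a₀ (1 + i tan(a₀ z / 2))` solves the Riccati equation `U' = (i/2) U (2a₀ - U)`, because
`tan' = 1 + tan²` and `(1 + iT)(1 - iT) = 1 + T²`. Differentiating once more,
`U'' = -(1/2) U (a₀ - U) (2a₀ - U)`, and with `λ = -a₀` this is exactly
`-(1/2) U³ - (3/2) λ U² - λ² U`.
-/

open Complex Filter Topology

theorem deriv_deriv_of_hasDerivAt_comp {𝕜 : Type*} [NontriviallyNormedField 𝕜]
    {f P : 𝕜 → 𝕜} {P' z : 𝕜} (hf : ∀ᶠ w in 𝓝 z, HasDerivAt f (P (f w)) w)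
    (hP : HasDerivAt P P' (f z)) :
    deriv (deriv f) z = P' * P (f z) := by
  have hderiv : deriv f =ᶠ[𝓝 z] P ∘ f := hf.mono fun w hw => hw.deriv
  rw [hderiv.deriv_eq, (hP.comp z hf.self_of_nhds).deriv]

theorem Complex.hasDerivAt_tan_one_add_sq {x : ℂ} (hx : cos x ≠ 0) :
    HasDerivAt tan (1 + tan x ^ 2) x := by
  simpa only [one_div, ← inv_one_add_tan_sq hx, inv_inv] using hasDerivAt_tan hx

theorem hasDerivAt_riccati_of_eq_mul_one_add_I_mul_tan {a₀ w : ℂ} {U : ℂ → ℂ}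
    (hU : ∀ z, U z = a₀ * (1 + I * tan (a₀ * z / 2))) (hw : cos (a₀ * w / 2) ≠ 0) :
    HasDerivAt U (I / 2 * U w * (2 * a₀ - U w)) w := by
  obtain rfl : U = fun z => a₀ * (1 + I * tan (a₀ * z / 2)) := funext hU
  have hlin : HasDerivAt (fun z => a₀ * z / 2) (a₀ / 2) w := by
    simpa using ((hasDerivAt_id w).const_mul a₀).div_const 2
  have htan := (hasDerivAt_tan_one_add_sq hw).comp w hlin
  exact (((htan.const_mul I).const_add 1).const_mul a₀).congr_deriv
    (by linear_combination I * a₀ ^ 2 * tan (a₀ * w / 2) ^ 2 / 2 * I_sq)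

/-- With `λ = -a₀`, the function `U(z) = a₀·(1 + i·tan(a₀·z/2))` satisfies
`U'' + (1/2)·U³ + (3/2)·λ·U² + λ²·U = 0` at every `z ∈ ℂ` with
`cos(a₀·z/2) ≠ 0`. -/
theorem variant_Boussinesq_ODE_solution_case_I
    (a₀ : ℂ) (lam : ℂ) (hlam : lam = -a₀)
    (U : ℂ → ℂ) (hU : ∀ z, U z = a₀ * (1 + Complex.I * Complex.tan (a₀ * z / 2))) :
    ∀ z : ℂ, Complex.cos (a₀ * z / 2) ≠ 0 →
      deriv (deriv U) z + (1 / 2) * U z ^ 3 + (3 / 2) * lam * U z ^ 2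
        + lam ^ 2 * U z = 0 := by
  intro z hz
  have hcos_ne : ∀ᶠ w in 𝓝 z, cos (a₀ * w / 2) ≠ 0 :=
    (by fun_prop : Continuous fun w => cos (a₀ * w / 2)).continuousAt.eventually_ne hz
  have hP : HasDerivAt (fun u => I / 2 * u * (2 * a₀ - u)) (I / 2 * (2 * a₀ - 2 * U z)) (U z) :=
    (((hasDerivAt_id' (U z)).const_mul (I / 2)).mul
      ((hasDerivAt_id' (U z)).const_sub (2 * a₀))).congr_deriv (by ring)
  rw [deriv_deriv_of_hasDerivAt_comp
    (hcos_ne.mono fun w => hasDerivAt_riccati_of_eq_mul_one_add_I_mul_tan hU) hP, hlam]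
  linear_combination U z * (a₀ - U z) * (2 * a₀ - U z) / 2 * I_sq
end

section
/- (Variant Boussinesq, Case I.) Let a₀ ∈ ℂ. Define u, v : ℝ × ℝ → ℂ by u(x,t) = a₀·(1 + i·tan((i·a₀/2)·(x - a₀·t))) and v(x,t) = a₀·u(x,t) - (1/2)·u(x,t)², where tan is the complex tangent. Then at every (x,t) ∈ ℝ × ℝ with cos((i·a₀/2)·(x - a₀·t)) ≠ 0, the pair (u,v) satisfies the variant Boussinesq equations: ∂ₜu + ∂ₓv + u·∂ₓu = 0 and ∂ₜv + ∂ₓ(u·v) + ∂ₓ∂ₓ∂ₓu = 0, where partial derivatives are derivatives of the one-variable sections. -/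
/-!
The solution is a travelling wave `u = U(x - a₀t)` whose profile
`U(z) = a₀(1 + i·tan(i·a₀z/2))` solves the Riccati equation `U' = U²/2 - a₀U`, i.e. `v = -U'`.
For any travelling wave of speed `a₀` with `v = a₀u - u²/2` the first equation holds
identically. The second becomes `a₀U'' - (UU')' + U''' = 0`, the derivative of
`a₀U' - UU' + U'' = 0`, which is the Riccati equation differentiated once.
-/

open Complex Set

section TravelingWave

variable {U : ℂ → ℂ} {a U' : ℂ} {x t : ℝ}

theorem HasDerivAt.travelingWave_dx (h : HasDerivAt U U' (↑x - a * ↑t)) :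
    HasDerivAt (fun y : ℝ => U (↑y - a * ↑t)) U' x :=
  (h.comp_sub_const (x : ℂ) (a * t)).comp_ofReal

theorem HasDerivAt.travelingWave_dt (h : HasDerivAt U U' (↑x - a * ↑t)) :
    HasDerivAt (fun r : ℝ => U (↑x - a * ↑r)) (-a * U') t := by
  have hlin : HasDerivAt (fun z : ℂ => (x : ℂ) - a * z) (-a) t := by
    simpa using ((hasDerivAt_id (t : ℂ)).const_mul a).const_sub (x : ℂ)
  exact ((h.comp (t : ℂ) hlin).comp_ofReal).congr_deriv (mul_comm _ _)

theorem eqOn_deriv_travelingWave_dx {s : Set ℂ} (hs : IsOpen s) (hU : DifferentiableOn ℂ U s)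
    (a : ℂ) (t : ℝ) :
    EqOn (deriv fun y : ℝ => U (↑y - a * ↑t)) (fun y => deriv U (↑y - a * ↑t))
      ((fun y : ℝ => (y : ℂ) - a * t) ⁻¹' s) :=
  fun _ hy => (hU.differentiableAt (hs.mem_nhds hy)).hasDerivAt.travelingWave_dx.deriv

theorem deriv_deriv_deriv_travelingWave_dx {s : Set ℂ} (hs : IsOpen s)
    (hU : DifferentiableOn ℂ U s) (hx : ↑x - a * ↑t ∈ s) :
    deriv (fun x₁ : ℝ => deriv (fun x₂ : ℝ => deriv (fun x₃ : ℝ => U (↑x₃ - a * ↑t)) x₂) x₁) x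
      = deriv (deriv (deriv U)) (↑x - a * ↑t) := by
  have hS : IsOpen ((fun y : ℝ => (y : ℂ) - a * t) ⁻¹' s) := hs.preimage (by fun_prop)
  have h₁ := eqOn_deriv_travelingWave_dx hs hU a t
  have h₂ := eqOn_deriv_travelingWave_dx hs (hU.deriv hs) a t
  have h₃ := eqOn_deriv_travelingWave_dx hs ((hU.deriv hs).deriv hs) a t
  calc _ = deriv (deriv fun y : ℝ => deriv U (↑y - a * ↑t)) x := (h₁.deriv hS).deriv hS hx
    _ = deriv (fun y : ℝ => deriv (deriv U) (↑y - a * ↑t)) x := h₂.deriv hS hx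
    _ = _ := h₃ hx

end TravelingWave

section Riccati

variable {U : ℂ → ℂ} {a z : ℂ} {s : Set ℂ}

theorem hasDerivAt_deriv_of_riccati (hs : IsOpen s)
    (hU : ∀ z ∈ s, HasDerivAt U (U z ^ 2 / 2 - a * U z) z) (hz : z ∈ s) :
    HasDerivAt (deriv U) ((U z - a) * (U z ^ 2 / 2 - a * U z)) z := by
  have h := hU z hz
  have hP : HasDerivAt (fun w => U w ^ 2 / 2 - a * U w)
      ((U z - a) * (U z ^ 2 / 2 - a * U z)) z := by
    refine (((h.pow 2).div_const 2).sub (h.const_mul a)).congr_deriv ?_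
    ring
  exact hP.congr_of_eventuallyEq
    (EqOn.eventuallyEq_of_mem (fun w hw => (hU w hw).deriv) (hs.mem_nhds hz))

theorem hasDerivAt_deriv_deriv_of_riccati (hs : IsOpen s)
    (hU : ∀ z ∈ s, HasDerivAt U (U z ^ 2 / 2 - a * U z) z) (hz : z ∈ s) :
    HasDerivAt (deriv (deriv U))
      ((U z ^ 2 / 2 - a * U z) * (U z ^ 2 / 2 - a * U z + (U z - a) ^ 2)) z := by
  have h := hU z hz
  have hQ : HasDerivAt (fun w => (U w - a) * (U w ^ 2 / 2 - a * U w))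
      ((U z ^ 2 / 2 - a * U z) * (U z ^ 2 / 2 - a * U z + (U z - a) ^ 2)) z := by
    refine ((h.sub_const a).mul (((h.pow 2).div_const 2).sub (h.const_mul a))).congr_deriv ?_
    simp only [Pi.sub_apply, Pi.pow_apply]
    ring
  exact hQ.congr_of_eventuallyEq (EqOn.eventuallyEq_of_mem
    (fun w hw => (hasDerivAt_deriv_of_riccati hs hU hw).deriv) (hs.mem_nhds hz))

end Riccati

section VariantBoussinesq

variable {U : ℂ → ℂ} {a : ℂ}

theorem travelingWave_variantBoussinesq_fst (u v : ℝ → ℝ → ℂ)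
    (hu : ∀ x t : ℝ, u x t = U (↑x - a * ↑t))
    (hv : ∀ x t : ℝ, v x t = a * u x t - (1 / 2) * (u x t) ^ 2) (x t : ℝ)
    (hU : DifferentiableAt ℂ U (↑x - a * ↑t)) :
    deriv (fun t' : ℝ => u x t') t + deriv (fun x' : ℝ => v x' t) x
      + u x t * deriv (fun x' : ℝ => u x' t) x = 0 := by
  obtain rfl : u = fun (x t : ℝ) => U (↑x - a * ↑t) := funext₂ hu
  obtain rfl : v = fun (x t : ℝ) => a * U (↑x - a * ↑t) - (1 / 2) * U (↑x - a * ↑t) ^ 2 :=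
    funext₂ hv
  have hx := hU.hasDerivAt.travelingWave_dx
  have hv_x : HasDerivAt (fun y : ℝ => a * U (↑y - a * ↑t) - 1 / 2 * U (↑y - a * ↑t) ^ 2) _ x :=
    (hx.const_mul a).sub ((hx.pow 2).const_mul (1 / 2))
  beta_reduce
  rw [hU.hasDerivAt.travelingWave_dt.deriv, hv_x.deriv, hx.deriv]
  ring

theorem travelingWave_variantBoussinesq_snd {s : Set ℂ} (hs : IsOpen s)
    (hU : ∀ z ∈ s, HasDerivAt U (U z ^ 2 / 2 - a * U z) z) (u v : ℝ → ℝ → ℂ)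
    (hu : ∀ x t : ℝ, u x t = U (↑x - a * ↑t))
    (hv : ∀ x t : ℝ, v x t = a * u x t - (1 / 2) * (u x t) ^ 2) (x t : ℝ)
    (hxt : ↑x - a * ↑t ∈ s) :
    deriv (fun t' : ℝ => v x t') t + deriv (fun x' : ℝ => u x' t * v x' t) x
      + deriv (fun x₁ : ℝ =>
          deriv (fun x₂ : ℝ => deriv (fun x₃ : ℝ => u x₃ t) x₂) x₁) x = 0 := by
  obtain rfl : u = fun (x t : ℝ) => U (↑x - a * ↑t) := funext₂ hu
  obtain rfl : v = fun (x t : ℝ) => a * U (↑x - a * ↑t) - (1 / 2) * U (↑x - a * ↑t) ^ 2 :=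
    funext₂ hv
  have hξ := hU _ hxt
  have hx := hξ.travelingWave_dx
  have ht := hξ.travelingWave_dt
  have hv_t : HasDerivAt (fun r : ℝ => a * U (↑x - a * ↑r) - 1 / 2 * U (↑x - a * ↑r) ^ 2) _ t :=
    (ht.const_mul a).sub ((ht.pow 2).const_mul (1 / 2))
  have huv_x : HasDerivAt (fun y : ℝ =>
      U (↑y - a * ↑t) * (a * U (↑y - a * ↑t) - 1 / 2 * U (↑y - a * ↑t) ^ 2)) _ x :=
    hx.mul ((hx.const_mul a).sub ((hx.pow 2).const_mul (1 / 2)))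
  beta_reduce
  rw [hv_t.deriv, huv_x.deriv, deriv_deriv_deriv_travelingWave_dx hs
      (fun z hz => (hU z hz).differentiableAt.differentiableWithinAt) hxt,
    (hasDerivAt_deriv_deriv_of_riccati hs hU hxt).deriv]
  ring

end VariantBoussinesq

noncomputable def kinkProfile (a z : ℂ) : ℂ :=
  a * (1 + I * tan (I * a / 2 * z))

theorem hasDerivAt_kinkProfile {a z : ℂ} (h : cos (I * a / 2 * z) ≠ 0) :
    HasDerivAt (kinkProfile a) (kinkProfile a z ^ 2 / 2 - a * kinkProfile a z) z := by
  have hlin : HasDerivAt (fun w : ℂ => I * a / 2 * w) (I * a / 2) z := by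
    simpa using (hasDerivAt_id z).const_mul (I * a / 2)
  refine ((((hasDerivAt_tan h).comp z hlin).const_mul I).const_add 1 |>.const_mul a).congr_deriv ?_
  rw [one_div, ← inv_one_add_tan_sq h, inv_inv]
  simp only [kinkProfile]
  linear_combination a ^ 2 / 2 * I_sq

/-- Variant Boussinesq, Case I: `u(x,t) = a₀(1 + i·tan((i·a₀/2)(x - a₀t)))`,
`v = a₀·u - u²/2` solve `uₜ + vₓ + u·uₓ = 0` and `vₜ + (u·v)ₓ + uₓₓₓ = 0`
wherever `cos((i·a₀/2)(x - a₀t)) ≠ 0`. -/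
theorem variant_Boussinesq_solution_case_I
    (a₀ : ℂ) (u v : ℝ → ℝ → ℂ)
    (hu : ∀ x t : ℝ, u x t
      = a₀ * (1 + Complex.I *
          Complex.tan ((Complex.I * a₀ / 2) * ((x : ℂ) - a₀ * (t : ℂ)))))
    (hv : ∀ x t : ℝ, v x t = a₀ * u x t - (1 / 2) * (u x t) ^ 2) :
    ∀ x t : ℝ, Complex.cos ((Complex.I * a₀ / 2) * ((x : ℂ) - a₀ * (t : ℂ))) ≠ 0 →
      (deriv (fun t' : ℝ => u x t') t + deriv (fun x' : ℝ => v x' t) x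
        + u x t * deriv (fun x' : ℝ => u x' t) x = 0) ∧
      (deriv (fun t' : ℝ => v x t') t + deriv (fun x' : ℝ => u x' t * v x' t) x
        + deriv (fun x₁ : ℝ =>
            deriv (fun x₂ : ℝ => deriv (fun x₃ : ℝ => u x₃ t) x₂) x₁) x = 0) := by
  intro x t hxt
  have hs : IsOpen {z : ℂ | cos (I * a₀ / 2 * z) ≠ 0} :=
    isOpen_ne_fun (by fun_prop) continuous_const
  have hU : ∀ z ∈ {z : ℂ | cos (I * a₀ / 2 * z) ≠ 0},
      HasDerivAt (kinkProfile a₀) (kinkProfile a₀ z ^ 2 / 2 - a₀ * kinkProfile a₀ z) z :=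
    fun _ hz => hasDerivAt_kinkProfile hz
  exact ⟨travelingWave_variantBoussinesq_fst u v hu hv x t (hU _ hxt).differentiableAt,
    travelingWave_variantBoussinesq_snd hs hU u v hu hv x t hxt⟩
end

section
/- (Variant Boussinesq, Case III.) Let a₀ ∈ ℝ. Define w(x,t) = (√2·a₀/4)·(x - a₀·t), u(x,t) = a₀ + (√2·a₀/2)·(tan(w(x,t)) + cot(w(x,t))), and v(x,t) = a₀·u(x,t) - (1/2)·u(x,t)². Then at every (x,t) ∈ ℝ × ℝ with sin(w(x,t)) ≠ 0 and cos(w(x,t)) ≠ 0, the pair (u,v) satisfies the variant Boussinesq equations: ∂ₜu + ∂ₓv + u·∂ₓu = 0 and ∂ₜv + ∂ₓ(u·v) + ∂ₓ∂ₓ∂ₓu = 0, where partial derivatives are derivatives of the one-variable sections. -/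
/-!
Since `tan y + cot y = 2 / sin (2y)`, the solution is the travelling wave `u x t = U (x - a₀ t)`
with cosecant profile `U ξ = a₀ + √2 a₀ csc (√2 a₀ ξ / 2)`. For any travelling wave of speed `a`
with `v = a u - u² / 2`, the first equation holds identically and the second reduces to the ODE
`U''' = (3/2 (U - a)² - a²/2) U'`. The profile solves it because `csc'' = 2 csc³ - csc`, so
`csc''' = (6 csc² - 1) csc'`; matching coefficients for `U ξ = a + K csc (C ξ)` forces
`K² = 2 a²` and `C² = a² / 2`.
-/

open Real Topology

section TravellingWave

variable (U : ℝ → ℝ) (a x t : ℝ)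

lemma deriv_comp_const_sub_mul : deriv (fun t => U (x - a * t)) t = -a * deriv U (x - a * t) := by
  have h := deriv_comp_mul_left a (fun s => U (x - s)) t
  rw [deriv_comp_const_sub, smul_eq_mul] at h
  rw [h, mul_neg, neg_mul]

lemma variantBoussinesq_of_travellingWave (u v : ℝ → ℝ → ℝ)
    (hu : ∀ x t, u x t = U (x - a * t)) (hv : ∀ x t, v x t = a * u x t - 1 / 2 * u x t ^ 2)
    (hU : DifferentiableAt ℝ U (x - a * t))
    (hU₃ : deriv (deriv (deriv U)) (x - a * t) =
      (3 / 2 * (U (x - a * t) - a) ^ 2 - a ^ 2 / 2) * deriv U (x - a * t)) :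
    (deriv (fun t' : ℝ => u x t') t + deriv (fun x' : ℝ => v x' t) x
        + u x t * deriv (fun x' : ℝ => u x' t) x = 0) ∧
      (deriv (fun t' : ℝ => v x t') t + deriv (fun x' : ℝ => u x' t * v x' t) x
        + deriv (fun x₁ : ℝ =>
            deriv (fun x₂ : ℝ => deriv (fun x₃ : ℝ => u x₃ t) x₂) x₁) x = 0) := by
  set V := fun ξ => a * U ξ - 1 / 2 * U ξ ^ 2
  obtain rfl : u = fun x t => U (x - a * t) := funext₂ hu
  obtain rfl : v = fun x t => V (x - a * t) := funext₂ hv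
  set ξ := x - a * t
  have hV : HasDerivAt V ((a - U ξ) * deriv U ξ) ξ := by
    refine ((hU.hasDerivAt.const_mul a).sub
      ((hU.hasDerivAt.pow 2).const_mul (1 / 2))).congr_deriv ?_
    ring
  have hUV : HasDerivAt (U * V) ((2 * a * U ξ - 3 / 2 * U ξ ^ 2) * deriv U ξ) ξ := by
    refine (hU.hasDerivAt.mul hV).congr_deriv ?_
    ring
  have u_x : deriv (fun x' => U (x' - a * t)) x = deriv U ξ := deriv_comp_sub_const U (a * t) x
  have u_t : deriv (fun t' => U (x - a * t')) t = -a * deriv U ξ :=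
    deriv_comp_const_sub_mul U a x t
  have v_x : deriv (fun x' => V (x' - a * t)) x = deriv V ξ := deriv_comp_sub_const V (a * t) x
  have v_t : deriv (fun t' => V (x - a * t')) t = -a * deriv V ξ :=
    deriv_comp_const_sub_mul V a x t
  have uv_x : deriv (fun x' => U (x' - a * t) * V (x' - a * t)) x = deriv (U * V) ξ :=
    deriv_comp_sub_const (U * V) (a * t) x
  have u_xxx : deriv (fun x₁ => deriv (fun x₂ => deriv (fun x₃ => U (x₃ - a * t)) x₂) x₁) x =
      deriv (deriv (deriv U)) ξ := by
    simp only [deriv_comp_sub_const, ξ]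
  rw [u_x, u_t, v_x, v_t, uv_x, u_xxx, hV.deriv, hUV.deriv, hU₃]
  constructor <;> ring

end TravellingWave

section InvSin

variable {s : ℝ}

lemma hasDerivAt_inv_sin (hs : sin s ≠ 0) :
    HasDerivAt (fun s => (sin s)⁻¹) (-cos s / sin s ^ 2) s :=
  (hasDerivAt_sin s).inv hs

lemma hasDerivAt_neg_cos_div_sin_sq (hs : sin s ≠ 0) :
    HasDerivAt (fun s => -cos s / sin s ^ 2) (2 * (sin s)⁻¹ ^ 3 - (sin s)⁻¹) s := by
  refine ((hasDerivAt_cos s).neg.div ((hasDerivAt_sin s).pow 2) (pow_ne_zero 2 hs)).congr_deriv ?_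
  simp only [Pi.neg_apply, Pi.pow_apply]
  field_simp
  linear_combination 2 * sin s * sin_sq_add_cos_sq s

lemma deriv_deriv_deriv_inv_sin (hs : sin s ≠ 0) :
    deriv (deriv (deriv fun s => (sin s)⁻¹)) s =
      (6 * (sin s)⁻¹ ^ 2 - 1) * deriv (fun s => (sin s)⁻¹) s := by
  have hnear : ∀ᶠ r in 𝓝 s, sin r ≠ 0 := continuous_sin.continuousAt.eventually_ne hs
  have h₁ : deriv (fun s => (sin s)⁻¹) =ᶠ[𝓝 s] fun r => -cos r / sin r ^ 2 :=
    hnear.mono fun r hr => (hasDerivAt_inv_sin hr).deriv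
  have h₂ : deriv (deriv fun s => (sin s)⁻¹) =ᶠ[𝓝 s] fun r => 2 * (sin r)⁻¹ ^ 3 - (sin r)⁻¹ := by
    filter_upwards [h₁.eventuallyEq_nhds, hnear] with r h₁r hr
    rw [h₁r.deriv_eq, (hasDerivAt_neg_cos_div_sin_sq hr).deriv]
  have h := hasDerivAt_inv_sin hs
  have h₃ : HasDerivAt (fun r => 2 * (sin r)⁻¹ ^ 3 - (sin r)⁻¹)
      ((6 * (sin s)⁻¹ ^ 2 - 1) * (-cos s / sin s ^ 2)) s :=
    (((h.pow 3).const_mul 2).sub h).congr_deriv (by ring)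
  rw [h₂.deriv_eq, h₃.deriv, h.deriv]

end InvSin

lemma deriv_const_mul_comp_mul (f : ℝ → ℝ) (K C : ℝ) :
    deriv (fun ξ => K * f (C * ξ)) = fun ξ => K * C * deriv f (C * ξ) := by
  rw [deriv_const_mul_field']
  funext ξ
  rw [deriv_comp_mul_left, smul_eq_mul, mul_assoc]

lemma deriv_deriv_deriv_of_eq_add_mul_inv_sin (U : ℝ → ℝ) (a K C ξ : ℝ)
    (hU : ∀ ξ, U ξ = a + K * (sin (C * ξ))⁻¹) (hK : K ^ 2 = 2 * a ^ 2) (hC : C ^ 2 = a ^ 2 / 2)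
    (hs : sin (C * ξ) ≠ 0) :
    deriv (deriv (deriv U)) ξ = (3 / 2 * (U ξ - a) ^ 2 - a ^ 2 / 2) * deriv U ξ := by
  obtain rfl : U = fun ξ => a + K * (sin (C * ξ))⁻¹ := funext hU
  simp only [deriv_const_add', deriv_const_mul_comp_mul (fun s => (sin s)⁻¹),
    deriv_const_mul_comp_mul (deriv fun s => (sin s)⁻¹),
    deriv_const_mul_comp_mul (deriv (deriv fun s => (sin s)⁻¹)), deriv_deriv_deriv_inv_sin hs]
  set h := (sin (C * ξ))⁻¹
  set h' := deriv (fun s => (sin s)⁻¹) (C * ξ)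
  linear_combination (K * C * h') * ((6 * h ^ 2 - 1) * hC - 3 / 2 * h ^ 2 * hK)

/-- At the junk points `sin y = 0` or `cos y = 0` both sides are `0`. -/
lemma tan_add_cos_div_sin (y : ℝ) : tan y + cos y / sin y = 2 * (sin (2 * y))⁻¹ := by
  rw [tan_eq_sin_div_cos, sin_two_mul]
  rcases eq_or_ne (sin y) 0 with hs | hs
  · simp [hs]
  rcases eq_or_ne (cos y) 0 with hc | hc
  · simp [hc]
  field_simp
  linear_combination sin_sq_add_cos_sq y

/-- Variant Boussinesq, Case III: with `w(x,t) = (√2·a₀/4)(x - a₀t)`,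
`u = a₀ + (√2·a₀/2)(tan w + cot w)`, `v = a₀·u - u²/2` solve
`uₜ + vₓ + u·uₓ = 0` and `vₜ + (u·v)ₓ + uₓₓₓ = 0` wherever
`sin w ≠ 0` and `cos w ≠ 0`. -/
theorem variant_Boussinesq_solution_case_III
    (a₀ : ℝ) (w : ℝ → ℝ → ℝ) (u v : ℝ → ℝ → ℝ)
    (hw : ∀ x t : ℝ, w x t = (Real.sqrt 2 * a₀ / 4) * (x - a₀ * t))
    (hu : ∀ x t : ℝ, u x t = a₀ + (Real.sqrt 2 * a₀ / 2) *
        (Real.tan (w x t) + Real.cos (w x t) / Real.sin (w x t)))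
    (hv : ∀ x t : ℝ, v x t = a₀ * u x t - (1 / 2) * (u x t) ^ 2) :
    ∀ x t : ℝ, Real.sin (w x t) ≠ 0 → Real.cos (w x t) ≠ 0 →
      (deriv (fun t' : ℝ => u x t') t + deriv (fun x' : ℝ => v x' t) x
        + u x t * deriv (fun x' : ℝ => u x' t) x = 0) ∧
      (deriv (fun t' : ℝ => v x t') t + deriv (fun x' : ℝ => u x' t * v x' t) x
        + deriv (fun x₁ : ℝ =>
            deriv (fun x₂ : ℝ => deriv (fun x₃ : ℝ => u x₃ t) x₂) x₁) x = 0) := by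
  intro x t hs hc
  have hu_wave : ∀ x t, u x t = a₀ + √2 * a₀ * (sin (√2 * a₀ / 2 * (x - a₀ * t)))⁻¹ := by
    intro x t
    rw [hu, tan_add_cos_div_sin, hw]
    ring_nf
  have hsin : sin (√2 * a₀ / 2 * (x - a₀ * t)) ≠ 0 := by
    rw [show √2 * a₀ / 2 * (x - a₀ * t) = 2 * w x t by rw [hw]; ring, sin_two_mul]
    exact mul_ne_zero (mul_ne_zero two_ne_zero hs) hc
  have hK : (√2 * a₀) ^ 2 = 2 * a₀ ^ 2 := by
    rw [mul_pow, sq_sqrt zero_le_two]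
  have hC : (√2 * a₀ / 2) ^ 2 = a₀ ^ 2 / 2 := by
    rw [div_pow, mul_pow, sq_sqrt zero_le_two]
    ring
  exact variantBoussinesq_of_travellingWave _ a₀ x t u v hu_wave hv
    (by fun_prop (disch := exact hsin))
    (deriv_deriv_deriv_of_eq_add_mul_inv_sin _ a₀ _ _ _ (fun _ => rfl) hK hC hsin)
end
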